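/- For a set R of Horn rules on a finite set Q, K(R) = A(R) (i.e., K(R) is an antimatroid) if and only if for every pair of nontrivial implicates (A, q) and (A', q') of K(R), both ((A ∪ A') \ {q, q'}, q) and ((A ∪ A') \ {q, q'}, q') are implicates of K(R). -/

import Mathlib

variable {α : Type*} [DecidableEq α] [Fintype α]

/-- A family of subsets is union-closed. -/
def UnionClosed (K : Set (Finset α)) : Prop :=
  ∀ X ∈ K, ∀ Y ∈ K, X ∪ Y ∈ K

/-- There is a tight path in `K` from `S` to `T`: a chain of members of `K`
each obtained from the previous by adding exactly one element. -/
def TightPath (K : Set (Finset α)) (S T : Finset α) : Prop :=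
  ∃ (k : ℕ) (Y : ℕ → Finset α), Y 0 = S ∧ Y k = T ∧ (∀ i ≤ k, Y i ∈ K) ∧
    ∀ i < k, Y i ⊆ Y (i + 1) ∧ (Y (i + 1) \ Y i).card = 1

/-- The family of members of `K` reachable from `∅` by a tight path in `K`. -/
def checkFam (K : Set (Finset α)) : Set (Finset α) :=
  {X | X ∈ K ∧ TightPath K ∅ X}

/-- Accessibility: every nonempty member can lose some element and stay in the family. -/
def Accessible (K : Set (Finset α)) : Prop :=
  ∀ X ∈ K, X ≠ ∅ → ∃ x ∈ X, X.erase x ∈ K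

/-- An antimatroid: contains `∅`, union-closed, and accessible. -/
def IsAntimatroid (K : Set (Finset α)) : Prop :=
  ∅ ∈ K ∧ UnionClosed K ∧ Accessible K

/-- A Horn rule `(A, q)` accepts `X` if `q ∈ X` implies `X ∩ A ≠ ∅`. -/
def Accepts (r : Finset α × α) (X : Finset α) : Prop :=
  r.2 ∈ X → (X ∩ r.1).Nonempty

/-- The union-closed family determined by a set of Horn rules. -/
def KFam (R : Set (Finset α × α)) : Set (Finset α) :=
  {X | ∀ r ∈ R, Accepts r X}

/-- The maximal antimatroid contained in `KFam R`. -/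
def AFam (R : Set (Finset α × α)) : Set (Finset α) :=
  checkFam (KFam R)

/-- A rule is an implicate of a family if it accepts every member. -/
def Implicate (K : Set (Finset α)) (r : Finset α × α) : Prop :=
  ∀ X ∈ K, Accepts r X

/-!
If `K` is accessible, the exchange condition holds: a minimal `X ∈ K` containing `q` and missing
`(A ∪ A') \ {q, q'}` meets `A` only in `q'`; removing `q` from `X` would violate `(A', q')`, and
removing anything else contradicts minimality.

Conversely, suppose `X ∈ K(R)` has no removable element. For each `x ∈ X`, a rule of `R` rejecting
`X.erase x` is a nontrivial implicate with head in `X.erase x` whose body meets `X` at most in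
`x`; say `x` reaches that head. Combining two such implicates by the exchange condition makes
reaching transitive, and `X ∈ K(R)` makes it irreflexive, which is impossible on the finite set
`X` when every element reaches another.

Finally, `K = A(K)` is just accessibility of `K`, since a tight path from `∅` can be built, and
read backwards, one removable element at a time.
-/

section

omit [Fintype α]

lemma empty_mem_KFam (R : Set (Finset α × α)) : (∅ : Finset α) ∈ KFam R :=
  fun _ _ h => absurd h (Finset.notMem_empty _)

lemma implicate_KFam_of_mem {R : Set (Finset α × α)} {r : Finset α × α} (hr : r ∈ R) :
    Implicate (KFam R) r :=
  fun _ hX => hX r hr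

namespace TightPath

variable {K : Set (Finset α)} {S T U : Finset α}

lemma snoc (hST : TightPath K S T) (hU : U ∈ K) (hTU : T ⊆ U) (hcard : (U \ T).card = 1) :
    TightPath K S U := by
  obtain ⟨k, Y, h0, hk, hmem, hstep⟩ := hST
  refine ⟨k + 1, fun i => if i ≤ k then Y i else U, by simp [h0], by simp, ?_, ?_⟩
  · intro i _
    dsimp only
    split_ifs with h
    exacts [hmem i h, hU]
  · intro i hi
    rcases Nat.lt_succ_iff_lt_or_eq.mp hi with hi | rfl
    · simpa [hi.le, Nat.succ_le_of_lt hi] using hstep i hi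
    · simpa [hk] using ⟨hTU, hcard⟩

lemma exists_erase_mem (hT : TightPath K ∅ T) (hne : T ≠ ∅) : ∃ x ∈ T, T.erase x ∈ K := by
  obtain ⟨k, Y, h0, hk, hmem, hstep⟩ := hT
  cases k with
  | zero => exact absurd (hk ▸ h0) hne
  | succ k =>
    obtain ⟨hsub, hcard⟩ := hstep k k.lt_succ_self
    obtain ⟨x, hx⟩ := Finset.card_eq_one.mp hcard
    subst hk
    have hxT : x ∈ Y (k + 1) := Finset.sdiff_subset (hx ▸ Finset.mem_singleton_self x)
    refine ⟨x, hxT, ?_⟩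
    rw [Finset.erase_eq, ← hx, Finset.sdiff_sdiff_eq_self hsub]
    exact hmem k k.le_succ

end TightPath

lemma accessible_of_eq_checkFam {K : Set (Finset α)} (h : K = checkFam K) : Accessible K := by
  intro X hX hne
  rw [h] at hX
  exact hX.2.exists_erase_mem hne

lemma Accessible.subset_checkFam {K : Set (Finset α)} (hK : Accessible K) (hempty : ∅ ∈ K) :
    K ⊆ checkFam K := by
  intro X hX
  induction X using Finset.strongInduction with
  | _ X ih =>
    refine ⟨hX, ?_⟩
    by_cases hne : X = ∅
    · subst hne
      exact ⟨0, fun _ => ∅, rfl, rfl, fun _ _ => hempty, fun _ hi => absurd hi (Nat.not_lt_zero _)⟩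
    · obtain ⟨x, hxX, hxK⟩ := hK X hX hne
      refine (ih _ (Finset.erase_ssubset hxX) hxK).2.snoc hX (Finset.erase_subset x X) ?_
      rw [Finset.sdiff_erase_self hxX, Finset.card_singleton]

lemma eq_checkFam_iff_accessible {K : Set (Finset α)} (hempty : ∅ ∈ K) :
    K = checkFam K ↔ Accessible K :=
  ⟨accessible_of_eq_checkFam,
    fun hK => (hK.subset_checkFam hempty).antisymm fun _ hX => hX.1⟩

/-- Half of the exchange condition for nontrivial implicates; the other half is this one with the
two rules swapped. -/
def ExchangeClosed (K : Set (Finset α)) : Prop :=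
  ∀ ⦃A : Finset α⦄ ⦃q : α⦄ ⦃A' : Finset α⦄ ⦃q' : α⦄, q ∉ A → q' ∉ A' →
    Implicate K (A, q) → Implicate K (A', q') → Implicate K ((A ∪ A') \ {q, q'}, q)

lemma Accessible.exchangeClosed {K : Set (Finset α)} (hK : Accessible K) : ExchangeClosed K := by
  intro A q A' q' hq hq' hI hI' X hX hqX
  induction X using Finset.strongInduction with
  | _ X ih =>
    by_contra hXB
    have hXAA' : ∀ b ∈ X, b ∈ A ∪ A' → b = q ∨ b = q' := by
      intro b hbX hbA
      by_contra hb
      exact hXB ⟨b, Finset.mem_inter.2 ⟨hbX, by simpa [hbA] using hb⟩⟩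
    obtain ⟨a, ha⟩ := hI X hX hqX
    obtain ⟨haX, haA⟩ := Finset.mem_inter.1 ha
    obtain rfl : a = q' := (hXAA' a haX (Finset.mem_union_left _ haA)).resolve_left
      fun h => hq (h ▸ haA)
    obtain ⟨x, hxX, hxK⟩ := hK X hX (Finset.ne_empty_of_mem hqX)
    by_cases hxq : x = q
    · subst hxq
      have haE : a ∈ X.erase x := Finset.mem_erase.2 ⟨fun h => hq (h ▸ haA), haX⟩
      obtain ⟨b, hb⟩ := hI' _ hxK haE
      obtain ⟨hbE, hbA'⟩ := Finset.mem_inter.1 hb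
      rcases hXAA' b (Finset.mem_of_mem_erase hbE) (Finset.mem_union_right _ hbA') with rfl | rfl
      exacts [Finset.notMem_erase b X hbE, hq' hbA']
    · obtain ⟨b, hb⟩ := ih _ (Finset.erase_ssubset hxX) hxK (Finset.mem_erase.2 ⟨Ne.symm hxq, hqX⟩)
      exact hXB ⟨b, Finset.inter_subset_inter_right (Finset.erase_subset x X) hb⟩

def Reaches (K : Set (Finset α)) (X : Finset α) (x y : α) : Prop :=
  ∃ B : Finset α, Implicate K (B, y) ∧ y ∉ B ∧ X ∩ B ⊆ {x}

lemma not_reaches_self {K : Set (Finset α)} {X : Finset α} (hX : X ∈ K) {x : α} (hx : x ∈ X) :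
    ¬ Reaches K X x x := by
  rintro ⟨B, hB, hxB, hXB⟩
  obtain ⟨b, hb⟩ := hB X hX hx
  obtain rfl : b = x := Finset.mem_singleton.1 (hXB hb)
  exact hxB (Finset.mem_inter.1 hb).2

lemma ExchangeClosed.reaches_trans {K : Set (Finset α)} (hK : ExchangeClosed K) {X : Finset α}
    {x y z : α} (hxy : Reaches K X x y) (hyz : Reaches K X y z) : Reaches K X x z := by
  obtain ⟨B, hB, hyB, hXB⟩ := hxy
  obtain ⟨C, hC, hzC, hXC⟩ := hyz
  refine ⟨(C ∪ B) \ {z, y}, hK hzC hyB hC hB, by simp, fun w hw => ?_⟩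
  simp only [Finset.mem_inter, Finset.mem_sdiff, Finset.mem_union, Finset.mem_insert,
    Finset.mem_singleton, not_or] at hw
  obtain ⟨hwX, hwC | hwB, -, hwy⟩ := hw
  · exact absurd (Finset.mem_singleton.1 (hXC (Finset.mem_inter.2 ⟨hwX, hwC⟩))) hwy
  · exact hXB (Finset.mem_inter.2 ⟨hwX, hwB⟩)

lemma ExchangeClosed.exists_forall_not_reaches {K : Set (Finset α)} (hK : ExchangeClosed K)
    {X : Finset α} (hX : X ∈ K) (hne : X.Nonempty) : ∃ x ∈ X, ∀ y ∈ X, ¬ Reaches K X x y := by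
  obtain ⟨x₀, hx₀⟩ := hne
  let r : X → X → Prop := fun y x => Reaches K X x y
  have : IsTrans X r := ⟨fun _ _ _ hab hbc => hK.reaches_trans hbc hab⟩
  have : Std.Irrefl r := ⟨fun x => not_reaches_self hX x.2⟩
  obtain ⟨⟨x, hx⟩, -, hmax⟩ := (Finite.wellFounded_of_trans_of_irrefl r).has_min Set.univ
    ⟨⟨x₀, hx₀⟩, trivial⟩
  exact ⟨x, hx, fun y hy => hmax ⟨y, hy⟩ trivial⟩

lemma ExchangeClosed.accessible_KFam {R : Set (Finset α × α)} (hR : ExchangeClosed (KFam R)) :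
    Accessible (KFam R) := by
  intro X hX hne
  obtain ⟨x, hxX, hx⟩ := hR.exists_forall_not_reaches hX (Finset.nonempty_iff_ne_empty.2 hne)
  refine ⟨x, hxX, fun r hr hrE => ?_⟩
  by_contra hmiss
  refine hx r.2 (Finset.mem_of_mem_erase hrE) ⟨r.1, implicate_KFam_of_mem hr,
    fun h => hmiss ⟨r.2, Finset.mem_inter.2 ⟨hrE, h⟩⟩, fun b hb => ?_⟩
  obtain ⟨hbX, hbr⟩ := Finset.mem_inter.1 hb
  rw [Finset.mem_singleton]
  by_contra hbx
  exact hmiss ⟨b, Finset.mem_inter.2 ⟨Finset.mem_erase.2 ⟨hbx, hbX⟩, hbr⟩⟩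

end

theorem stmt16 (R : Set (Finset α × α)) :
    KFam R = AFam R ↔
      ∀ (A : Finset α) (q : α) (A' : Finset α) (q' : α),
        q ∉ A → q' ∉ A' →
        Implicate (KFam R) (A, q) → Implicate (KFam R) (A', q') →
        Implicate (KFam R) ((A ∪ A') \ {q, q'}, q) ∧
          Implicate (KFam R) ((A ∪ A') \ {q, q'}, q') := by
  rw [AFam, eq_checkFam_iff_accessible (empty_mem_KFam R)]
  constructor
  · intro hacc A q A' q' hq hq' hI hI'
    refine ⟨hacc.exchangeClosed hq hq' hI hI', ?_⟩
    simpa only [Finset.union_comm, Finset.pair_comm] using hacc.exchangeClosed hq' hq hI' hI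
  · intro H
    exact ExchangeClosed.accessible_KFam fun A q A' q' hq hq' hI hI' => (H A q A' q' hq hq' hI hI').1
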